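/- arXiv:math/0104229 — 3 statements merged into one kernel-verified Lean document; each statement's English description precedes it below -/
import Mathlib

section
/- For $0\le 2k\le n$, the number of permutations $\sigma\in S_n$ containing at least $k$ 2-cycles (transposition cycles) is at most $\frac{n!}{k!\,2^k}$. -/
/-- Number of 2-cycles (transposition cycles) in a permutation. -/
def numTwoCycles {n : ℕ} (σ : Equiv.Perm (Fin n)) : ℕ :=
  (Finset.univ.filter (fun x : Fin n × Fin n =>
      x.1 < x.2 ∧ σ x.1 = x.2 ∧ σ x.2 = x.1)).card

namespace TwoCyc

open Finset Function
open scoped Classical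

variable {n k : ℕ}

/-- The point of the pair `t i` selected by `b`. -/
def Pt (t : Fin k → Fin n × Fin n) (i : Fin k) (b : Bool) : Fin n :=
  if b then (t i).2 else (t i).1

/-- `t` is a sorted list of `k` 2-cycles of `σ`. -/
def Good (σ : Equiv.Perm (Fin n)) (t : Fin k → Fin n × Fin n) : Prop :=
  StrictMono (fun i => (t i).1) ∧
    ∀ i, (t i).1 < (t i).2 ∧ σ (t i).1 = (t i).2 ∧ σ (t i).2 = (t i).1

/-- The set of points covered by the pairs of `t`. -/
def PSet (t : Fin k → Fin n × Fin n) : Finset (Fin n) :=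
  Finset.image (fun z : Fin k × Bool => Pt t z.1 z.2) Finset.univ

section basic
variable {σ : Equiv.Perm (Fin n)} {t : Fin k → Fin n × Fin n} (hg : Good σ t)

include hg

lemma cross_ne : ∀ i j : Fin k, (t i).1 ≠ (t j).2 := by
  obtain ⟨hm, hc⟩ := hg
  intro i j he
  have h1 : (t i).2 = (t j).1 := by
    have h2 := (hc i).2.1
    rw [he, (hc j).2.2] at h2
    exact h2.symm
  exact absurd (lt_trans (h1 ▸ (hc i).1) (he ▸ (hc j).1)) (lt_irrefl _)

lemma snd_inj : ∀ i j : Fin k, (t i).2 = (t j).2 → i = j := by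
  intro i j he
  have h2 := (hg.2 i).2.2
  rw [he, (hg.2 j).2.2] at h2
  exact (hg.1.injective h2).symm

lemma pt_inj : Function.Injective (fun z : Fin k × Bool => Pt t z.1 z.2) := by
  rintro ⟨i, b⟩ ⟨j, c⟩ h
  simp only [Pt] at h
  cases b <;> cases c <;> simp only [if_true, if_false, Bool.false_eq_true] at h ⊢
  · exact Prod.ext (hg.1.injective h) rfl
  · exact absurd h (cross_ne hg i j)
  · exact absurd h.symm (cross_ne hg j i)
  · exact Prod.ext (snd_inj hg i j h) rfl

lemma pt_inj4 : ∀ i i' : Fin k, ∀ b b' : Bool, Pt t i b = Pt t i' b' → i = i' ∧ b = b' := by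
  intro i i' b b' h
  have h2 := pt_inj hg (show (fun z : Fin k × Bool => Pt t z.1 z.2) (i, b)
      = (fun z : Fin k × Bool => Pt t z.1 z.2) (i', b') from h)
  exact ⟨congrArg Prod.fst h2, congrArg Prod.snd h2⟩

lemma card_PSet : (PSet t).card = 2 * k := by
  rw [PSet, Finset.card_image_of_injective _ (pt_inj hg)]
  simp [mul_comm]

lemma card_compl_PSet : (PSet t)ᶜ.card = n - 2 * k := by
  rw [Finset.card_compl, card_PSet hg]
  simp

lemma sigma_mem_PSet {x : Fin n} (hx : x ∈ PSet t) : σ x ∈ PSet t := by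
  simp only [PSet, Finset.mem_image, Finset.mem_univ, true_and] at hx ⊢
  obtain ⟨⟨i, b⟩, rfl⟩ := hx
  cases b
  · exact ⟨⟨i, true⟩, by simp [Pt, (hg.2 i).2.1]⟩
  · exact ⟨⟨i, false⟩, by simp [Pt, (hg.2 i).2.2]⟩

lemma good_inv : Good σ⁻¹ t := by
  refine ⟨hg.1, fun i => ⟨(hg.2 i).1, ?_, ?_⟩⟩
  · rw [Equiv.Perm.inv_def, Equiv.symm_apply_eq]
    exact ((hg.2 i).2.2).symm
  · rw [Equiv.Perm.inv_def, Equiv.symm_apply_eq]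
    exact ((hg.2 i).2.1).symm

end basic

/-- The encoding function. -/
def EFun (hk : 2 * k ≤ n) (σ : Equiv.Perm (Fin n)) (t : Fin k → Fin n × Fin n)
    (π : Equiv.Perm (Fin k)) (ε : Fin k → Bool) (hg : Good σ t) : Fin n → Fin n := fun j =>
  if h : (j : ℕ) < 2 * k then
    Pt t (π ⟨(j : ℕ) / 2, by omega⟩) (xor (decide ((j : ℕ) % 2 = 1)) (ε ⟨(j : ℕ) / 2, by omega⟩))
  else
    σ ((((PSet t)ᶜ).orderIsoOfFin (card_compl_PSet hg)
        ⟨(j : ℕ) - 2 * k, by have := j.isLt; omega⟩ : {x // x ∈ (PSet t)ᶜ}) : Fin n)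

lemma EFun_inj (hk : 2 * k ≤ n) (σ : Equiv.Perm (Fin n)) (t : Fin k → Fin n × Fin n)
    (π : Equiv.Perm (Fin k)) (ε : Fin k → Bool) (hg : Good σ t) :
    Function.Injective (EFun hk σ t π ε hg) := by
  intro j j' h
  unfold EFun at h
  by_cases h1 : (j : ℕ) < 2 * k <;> by_cases h2 : (j' : ℕ) < 2 * k
  · rw [dif_pos h1, dif_pos h2] at h
    obtain ⟨hi, hb⟩ := pt_inj4 hg _ _ _ _ h
    have hi2 : ((j : ℕ) / 2 : ℕ) = (j' : ℕ) / 2 := congrArg Fin.val (π.injective hi)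
    have hε : (⟨(j : ℕ) / 2, by omega⟩ : Fin k) = ⟨(j' : ℕ) / 2, by omega⟩ := Fin.ext hi2
    rw [hε] at hb
    have hpar : decide ((j : ℕ) % 2 = 1) = decide ((j' : ℕ) % 2 = 1) := by
      rcases Bool.eq_false_or_eq_true (ε ⟨(j' : ℕ) / 2, by omega⟩) with hE | hE <;>
        rw [hE] at hb <;> simpa using hb
    have hiff : ((j : ℕ) % 2 = 1) ↔ ((j' : ℕ) % 2 = 1) := decide_eq_decide.mp hpar
    have hm : (j : ℕ) % 2 = (j' : ℕ) % 2 := by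
      by_cases hh : (j : ℕ) % 2 = 1
      · rw [hh, hiff.mp hh]
      · have hh' : ¬((j' : ℕ) % 2 = 1) := fun a => hh (hiff.mpr a)
        omega
    apply Fin.ext
    omega
  · exfalso
    rw [dif_pos h1, dif_neg h2] at h
    have hmem : Pt t (π ⟨(j : ℕ) / 2, by omega⟩)
        (xor (decide ((j : ℕ) % 2 = 1)) (ε ⟨(j : ℕ) / 2, by omega⟩)) ∈ PSet t := by
      simp only [PSet, Finset.mem_image]; exact ⟨⟨_, _⟩, Finset.mem_univ _, rfl⟩
    rw [h] at hmem
    have h3 := sigma_mem_PSet (good_inv hg) hmem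
    simp only [Equiv.Perm.inv_def, Equiv.symm_apply_apply] at h3
    exact absurd h3 (Finset.mem_compl.mp (Finset.coe_mem _))
  · exfalso
    rw [dif_neg h1, dif_pos h2] at h
    have hmem : Pt t (π ⟨(j' : ℕ) / 2, by omega⟩)
        (xor (decide ((j' : ℕ) % 2 = 1)) (ε ⟨(j' : ℕ) / 2, by omega⟩)) ∈ PSet t := by
      simp only [PSet, Finset.mem_image]; exact ⟨⟨_, _⟩, Finset.mem_univ _, rfl⟩
    rw [← h] at hmem
    have h3 := sigma_mem_PSet (good_inv hg) hmem
    simp only [Equiv.Perm.inv_def, Equiv.symm_apply_apply] at h3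
    exact absurd h3 (Finset.mem_compl.mp (Finset.coe_mem _))
  · rw [dif_neg h1, dif_neg h2] at h
    have h3 := σ.injective h
    have h4 := Subtype.ext h3
    have h5 := (((PSet t)ᶜ).orderIsoOfFin (card_compl_PSet hg)).injective h4
    have h6 := congrArg Fin.val h5
    simp only at h6
    apply Fin.ext
    have := j.isLt; have := j'.isLt
    omega

section at_lemmas
variable {σ : Equiv.Perm (Fin n)} {t : Fin k → Fin n × Fin n} (hg : Good σ t)
variable (hk : 2 * k ≤ n) (π : Equiv.Perm (Fin k)) (ε : Fin k → Bool)

lemma EFun_at0 (i : Fin k) (hin : 2 * (i : ℕ) < n) :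
    EFun hk σ t π ε hg ⟨2 * (i : ℕ), hin⟩ = Pt t (π i) (ε i) := by
  have hlt : ((⟨2 * (i : ℕ), hin⟩ : Fin n) : ℕ) < 2 * k := by
    have := i.isLt; simp only [Fin.val_mk]; omega
  rw [EFun, dif_pos hlt]
  have hidx : ∀ p : 2 * (i : ℕ) / 2 < k, (⟨2 * (i : ℕ) / 2, p⟩ : Fin k) = i :=
    fun p => Fin.ext (show 2 * (i : ℕ) / 2 = (i : ℕ) by omega)
  have hpar : decide ((2 * (i : ℕ)) % 2 = 1) = false := by
    rw [decide_eq_false_iff_not]; omega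
  simp only [Fin.val_mk, hidx, hpar, Bool.false_xor]

lemma EFun_at1 (i : Fin k) (hin : 2 * (i : ℕ) + 1 < n) :
    EFun hk σ t π ε hg ⟨2 * (i : ℕ) + 1, hin⟩ = Pt t (π i) (!(ε i)) := by
  have hlt : ((⟨2 * (i : ℕ) + 1, hin⟩ : Fin n) : ℕ) < 2 * k := by
    have := i.isLt; simp only [Fin.val_mk]; omega
  rw [EFun, dif_pos hlt]
  have hidx : ∀ p : (2 * (i : ℕ) + 1) / 2 < k, (⟨(2 * (i : ℕ) + 1) / 2, p⟩ : Fin k) = i :=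
    fun p => Fin.ext (show (2 * (i : ℕ) + 1) / 2 = (i : ℕ) by omega)
  have hpar : decide ((2 * (i : ℕ) + 1) % 2 = 1) = true := by
    rw [decide_eq_true_eq]; omega
  simp only [Fin.val_mk, hidx, hpar, Bool.true_xor]

lemma EFun_atc (r : Fin (n - 2 * k)) (hin : 2 * k + (r : ℕ) < n) :
    EFun hk σ t π ε hg ⟨2 * k + (r : ℕ), hin⟩
      = σ ((((PSet t)ᶜ).orderIsoOfFin (card_compl_PSet hg) r : {x // x ∈ (PSet t)ᶜ}) : Fin n) := by
  have hlt : ¬ ((⟨2 * k + (r : ℕ), hin⟩ : Fin n) : ℕ) < 2 * k := by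
    simp only [Fin.val_mk]; omega
  rw [EFun, dif_neg hlt]
  have hidx : ∀ p : (2 * k + (r : ℕ)) - 2 * k < n - 2 * k,
      (⟨(2 * k + (r : ℕ)) - 2 * k, p⟩ : Fin (n - 2 * k)) = r :=
    fun p => Fin.ext (show (2 * k + (r : ℕ)) - 2 * k = (r : ℕ) by omega)
  simp only [Fin.val_mk, hidx]

end at_lemmas

lemma decode (hk : 2 * k ≤ n) {σ1 σ2 : Equiv.Perm (Fin n)} {t1 t2 : Fin k → Fin n × Fin n}
    {π1 π2 : Equiv.Perm (Fin k)} {ε1 ε2 : Fin k → Bool}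
    (hg1 : Good σ1 t1) (hg2 : Good σ2 t2)
    (h : EFun hk σ1 t1 π1 ε1 hg1 = EFun hk σ2 t2 π2 ε2 hg2) :
    σ1 = σ2 ∧ t1 = t2 ∧ π1 = π2 ∧ ε1 = ε2 := by
  have key : ∀ i : Fin k, t1 (π1 i) = t2 (π2 i) ∧ ε1 i = ε2 i := by
    intro i
    have hn0 : 2 * (i : ℕ) < n := by have := i.isLt; omega
    have hn1 : 2 * (i : ℕ) + 1 < n := by have := i.isLt; omega
    have e0 : Pt t1 (π1 i) (ε1 i) = Pt t2 (π2 i) (ε2 i) := by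
      rw [← EFun_at0 hg1 hk π1 ε1 i hn0, ← EFun_at0 hg2 hk π2 ε2 i hn0, h]
    have e1 : Pt t1 (π1 i) (!(ε1 i)) = Pt t2 (π2 i) (!(ε2 i)) := by
      rw [← EFun_at1 hg1 hk π1 ε1 i hn1, ← EFun_at1 hg2 hk π2 ε2 i hn1, h]
    by_cases hε : ε1 i = ε2 i
    · refine ⟨?_, hε⟩
      rw [hε] at e0 e1
      cases hb : ε2 i
      · rw [hb] at e0 e1
        exact Prod.ext (by simpa [Pt] using e0) (by simpa [Pt] using e1)
      · rw [hb] at e0 e1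
        exact Prod.ext (by simpa [Pt] using e1) (by simpa [Pt] using e0)
    · exfalso
      have hε2 : ε2 i = !(ε1 i) := by
        cases h1 : ε1 i <;> cases h2 : ε2 i <;> simp_all
      rw [hε2] at e0
      rw [hε2, Bool.not_not] at e1
      have l1 := (hg1.2 (π1 i)).1
      have l2 := (hg2.2 (π2 i)).1
      cases hb : ε1 i
      · rw [hb] at e0 e1
        simp [Pt] at e0 e1
        rw [e0, e1] at l1
        exact absurd (lt_trans l1 l2) (lt_irrefl _)
      · rw [hb] at e0 e1
        simp [Pt] at e0 e1
        rw [e1, e0] at l1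
        exact absurd (lt_trans l1 l2) (lt_irrefl _)
  have keyPair : ∀ i : Fin k, ∃ j, t1 i = t2 j := by
    intro i
    refine ⟨π2 (π1.symm i), ?_⟩
    have h2 := (key (π1.symm i)).1
    rwa [Equiv.apply_symm_apply] at h2
  have keyPair' : ∀ i : Fin k, ∃ j, t2 i = t1 j := by
    intro i
    refine ⟨π1 (π2.symm i), ?_⟩
    have h2 := (key (π2.symm i)).1
    rw [Equiv.apply_symm_apply] at h2
    exact h2.symm
  haveI : WellFoundedLT (Fin k) := Finite.to_wellFoundedLT
  have hfst : (fun i => (t1 i).1) = fun i => (t2 i).1 := by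
    rw [← hg1.1.range_inj hg2.1]
    ext x
    simp only [Set.mem_range]
    constructor
    · rintro ⟨i, rfl⟩
      obtain ⟨j, hj⟩ := keyPair i
      exact ⟨j, by rw [hj]⟩
    · rintro ⟨i, rfl⟩
      obtain ⟨j, hj⟩ := keyPair' i
      exact ⟨j, by rw [hj]⟩
  have ht : t1 = t2 := by
    funext i
    obtain ⟨j, hj⟩ := keyPair i
    have h3 : (t2 j).1 = (t2 i).1 := by rw [← hj]; exact congrFun hfst i
    have hji : j = i := hg2.1.injective h3
    rw [hj, hji]
  subst ht
  have hπ : π1 = π2 := by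
    apply Equiv.ext
    intro i
    exact hg1.1.injective (congrArg Prod.fst ((key i).1))
  have hε : ε1 = ε2 := funext fun i => (key i).2
  refine ⟨?_, rfl, hπ, hε⟩
  apply Equiv.ext
  intro x
  by_cases hx : x ∈ PSet t1
  · simp only [PSet, Finset.mem_image, Finset.mem_univ, true_and] at hx
    obtain ⟨⟨i, b⟩, rfl⟩ := hx
    cases b
    · simp only [Pt, if_false, Bool.false_eq_true]
      rw [(hg1.2 i).2.1, (hg2.2 i).2.1]
    · simp only [Pt, if_true]
      rw [(hg1.2 i).2.2, (hg2.2 i).2.2]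
  · have hx' : x ∈ (PSet t1)ᶜ := Finset.mem_compl.mpr hx
    set r : Fin (n - 2 * k) :=
      (((PSet t1)ᶜ).orderIsoOfFin (card_compl_PSet hg1)).symm ⟨x, hx'⟩ with hr
    have hin : 2 * k + (r : ℕ) < n := by have := r.isLt; omega
    have ha1 := EFun_atc hg1 hk π1 ε1 r hin
    have ha2 := EFun_atc hg2 hk π2 ε2 r hin
    rw [h] at ha1
    have hiso : ((((PSet t1)ᶜ).orderIsoOfFin (card_compl_PSet hg1) r :
        {y // y ∈ (PSet t1)ᶜ}) : Fin n) = x := by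
      rw [hr, OrderIso.apply_symm_apply]
    have hiso2 : ((((PSet t1)ᶜ).orderIsoOfFin (card_compl_PSet hg2) r :
        {y // y ∈ (PSet t1)ᶜ}) : Fin n) = x := hiso
    rw [ha2, hiso2] at ha1
    rw [← ha1]

/-- The finset of 2-cycles of `σ`. -/
def TC (σ : Equiv.Perm (Fin n)) : Finset (Fin n × Fin n) :=
  Finset.univ.filter (fun x : Fin n × Fin n => x.1 < x.2 ∧ σ x.1 = x.2 ∧ σ x.2 = x.1)

lemma numTwoCycles_eq (σ : Equiv.Perm (Fin n)) : numTwoCycles σ = (TC σ).card := by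
  unfold numTwoCycles TC
  congr 1

/-- First coordinates of 2-cycles. -/
def TC1 (σ : Equiv.Perm (Fin n)) : Finset (Fin n) := (TC σ).image Prod.fst

lemma card_TC1 (σ : Equiv.Perm (Fin n)) : (TC1 σ).card = numTwoCycles σ := by
  rw [numTwoCycles_eq, TC1]
  apply Finset.card_image_of_injOn
  intro x hx y hy hxy
  simp only [Finset.mem_coe, TC, Finset.mem_filter, Finset.mem_univ, true_and] at hx hy
  have hx2 : x.2 = σ x.1 := hx.2.1.symm
  have hy2 : y.2 = σ y.1 := hy.2.1.symm
  exact Prod.ext hxy (by rw [hx2, hy2, hxy])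

/-- The canonical choice of `k` 2-cycles. -/
def canonT (hk : 2 * k ≤ n) (σ : Equiv.Perm (Fin n)) : Fin k → Fin n × Fin n :=
  if h : k ≤ (TC1 σ).card then
    fun i => ((TC1 σ).orderEmbOfCardLe h i, σ ((TC1 σ).orderEmbOfCardLe h i))
  else fun i => ((⟨0, by have := i.isLt; omega⟩ : Fin n), (⟨0, by have := i.isLt; omega⟩ : Fin n))

lemma good_canonT (hk : 2 * k ≤ n) {σ : Equiv.Perm (Fin n)} (h : k ≤ numTwoCycles σ) :
    Good σ (canonT hk σ) := by
  have h' : k ≤ (TC1 σ).card := by rw [card_TC1]; exact h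
  rw [canonT, dif_pos h']
  have key : ∀ a ∈ TC1 σ, a < σ a ∧ σ (σ a) = a := by
    intro a ha
    simp only [TC1, Finset.mem_image] at ha
    obtain ⟨p, hp, rfl⟩ := ha
    simp only [TC, Finset.mem_filter, Finset.mem_univ, true_and] at hp
    obtain ⟨hlt, hab, hba⟩ := hp
    rw [hab]
    exact ⟨hlt, hba⟩
  constructor
  · exact fun i j hij => ((TC1 σ).orderEmbOfCardLe h').strictMono hij
  · intro i
    obtain ⟨h1, h2⟩ := key _ ((TC1 σ).orderEmbOfCardLe_mem h' i)
    exact ⟨h1, rfl, h2⟩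

lemma cardA_le_cardS (hk : 2 * k ≤ n) :
    ((Finset.univ.filter (fun σ : Equiv.Perm (Fin n) => k ≤ numTwoCycles σ)).card : ℕ)
      ≤ ((Finset.univ.filter
          (fun p : Equiv.Perm (Fin n) × (Fin k → Fin n × Fin n) => Good p.1 p.2)).card) := by
  apply Finset.card_le_card_of_injOn (fun σ => (σ, canonT hk σ))
  · intro σ hσ
    simp only [Finset.coe_filter, Finset.mem_coe, Set.mem_setOf_eq, Finset.mem_filter, Finset.mem_univ, true_and] at hσ ⊢
    exact good_canonT hk hσ
  · intro σ1 _ σ2 _ h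
    exact congrArg Prod.fst h

/-- The full encoding map on quadruples. -/
noncomputable def Encode (hk : 2 * k ≤ n)
    (q : (Equiv.Perm (Fin n) × (Fin k → Fin n × Fin n)) × (Equiv.Perm (Fin k) × (Fin k → Bool))) :
    Equiv.Perm (Fin n) :=
  if hg : Good q.1.1 q.1.2 then
    Equiv.ofBijective _
      (Finite.injective_iff_bijective.mp (EFun_inj hk q.1.1 q.1.2 q.2.1 q.2.2 hg))
  else 1

lemma cardT_le (hk : 2 * k ≤ n) :
    (((Finset.univ.filter
        (fun p : Equiv.Perm (Fin n) × (Fin k → Fin n × Fin n) => Good p.1 p.2)) ×ˢ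
      (Finset.univ : Finset (Equiv.Perm (Fin k) × (Fin k → Bool)))).card)
      ≤ n.factorial := by
  have h1 : (((Finset.univ.filter
        (fun p : Equiv.Perm (Fin n) × (Fin k → Fin n × Fin n) => Good p.1 p.2)) ×ˢ
      (Finset.univ : Finset (Equiv.Perm (Fin k) × (Fin k → Bool)))).card)
      ≤ (Finset.univ : Finset (Equiv.Perm (Fin n))).card := by
    apply Finset.card_le_card_of_injOn (Encode hk) (fun _ _ => Finset.mem_univ _)
    intro q1 hq1 q2 hq2 h
    simp only [Finset.mem_coe, Finset.mem_product, Finset.mem_filter, Finset.mem_univ,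
      true_and, and_true] at hq1 hq2
    rw [Encode, Encode, dif_pos hq1, dif_pos hq2] at h
    have hEF : EFun hk q1.1.1 q1.1.2 q1.2.1 q1.2.2 hq1
        = EFun hk q2.1.1 q2.1.2 q2.2.1 q2.2.2 hq2 :=
      funext fun x => congrFun (congrArg (fun e : Equiv.Perm (Fin n) => (e : Fin n → Fin n)) h) x
    obtain ⟨hσ, ht, hπ, hε⟩ := decode hk hq1 hq2 hEF
    exact Prod.ext (Prod.ext hσ ht) (Prod.ext hπ hε)
  calc _ ≤ (Finset.univ : Finset (Equiv.Perm (Fin n))).card := h1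
    _ = n.factorial := by
        rw [Finset.card_univ, Fintype.card_perm, Fintype.card_fin]

end TwoCyc

theorem stmt_9 (n k : ℕ) (hk : 2 * k ≤ n) :
    (Finset.univ.filter (fun σ : Equiv.Perm (Fin n) => k ≤ numTwoCycles σ)).card
        * (k.factorial * 2 ^ k) ≤ n.factorial := by
  have h2 := TwoCyc.cardT_le hk
  rw [Finset.card_product] at h2
  have h3 : (Finset.univ : Finset (Equiv.Perm (Fin k) × (Fin k → Bool))).card
      = k.factorial * 2 ^ k := by
    rw [Finset.card_univ, Fintype.card_prod, Fintype.card_perm, Fintype.card_fin,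
      Fintype.card_fun, Fintype.card_bool, Fintype.card_fin]
  rw [h3] at h2
  calc (Finset.univ.filter (fun σ : Equiv.Perm (Fin n) => k ≤ numTwoCycles σ)).card
        * (k.factorial * 2 ^ k)
      ≤ _ * (k.factorial * 2 ^ k) := Nat.mul_le_mul_right _ (TwoCyc.cardA_le_cardS hk)
    _ ≤ n.factorial := h2
end

section
/- For $\sigma\in S_n$, $\sigma\ne e$, set $a_\sigma=(p(\sigma),\, 2t(\sigma)/(n-p(\sigma)))\in\mathbb{R}^2$ and let $P$ be the convex hull of all such points. If $n\ge 4$ is even, the extreme points of $P$ are exactly $(0,0)$, $(n-3,0)$, $(n-2,1)$ and $(0,1)$. -/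
/-- Number of fixed points of a permutation. -/
def numFixedPoints {n : ℕ} (σ : Equiv.Perm (Fin n)) : ℕ :=
  (Finset.univ.filter (fun i : Fin n => σ i = i)).card

lemma extreme_aux (s : Set (ℝ × ℝ)) (v : ℝ × ℝ) (hv : v ∈ s)
    (a b c ε : ℝ) (hε : 0 < ε)
    (hvc : a * v.1 + b * v.2 = c)
    (h : ∀ w ∈ s, w = v ∨ c + ε ≤ a * w.1 + b * w.2) :
    v ∈ (convexHull ℝ s).extremePoints ℝ := by
  set f : ℝ × ℝ → ℝ := fun w => a * w.1 + b * w.2 with hf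
  have hlin : IsLinearMap ℝ f := by
    constructor
    · intro x y; simp [hf]; ring
    · intro m x; simp [hf, smul_eq_mul]; ring
  -- lower bound on hull
  have hlb : ∀ x ∈ convexHull ℝ s, c ≤ f x := by
    intro x hx
    have : convexHull ℝ s ⊆ {w | c ≤ f w} := by
      apply convexHull_min _ (convex_halfSpace_ge hlin c)
      intro w hw
      rcases h w hw with rfl | hw'
      · exact hvc.ge
      · exact le_trans (by linarith) hw'
    exact this hx
  -- rigidity
  have hrig : ∀ x ∈ convexHull ℝ s, f x = c → x = v := by
    intro x hx hfx
    set T : Set (ℝ × ℝ) := {w | c + ε ≤ f w} with hT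
    have hsub : s ⊆ insert v T := by
      intro w hw
      rcases h w hw with rfl | hw'
      · exact Set.mem_insert _ _
      · exact Set.mem_insert_of_mem _ hw'
    have hx' : x ∈ convexHull ℝ (insert v T) := convexHull_mono hsub hx
    rcases Set.eq_empty_or_nonempty T with hTe | hTne
    · rw [hTe] at hx'
      simpa using hx'
    · rw [convexHull_insert hTne, mem_convexJoin] at hx'
      obtain ⟨p, hp, q, hq, hseg⟩ := hx'
      rw [Set.mem_singleton_iff] at hp
      subst hp
      have hqT : q ∈ T := by
        rwa [(convex_halfSpace_ge hlin (c + ε)).convexHull_eq] at hq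
      obtain ⟨α, β, hα, hβ, hαβ, hcomb⟩ := hseg
      have hfq : c + ε ≤ f q := hqT
      have hfx2 : f x = α * (a * p.1 + b * p.2) + β * (f q) := by
        rw [← hcomb]; simp [hf]; ring
      have hβ0 : β = 0 := by
        rcases eq_or_lt_of_le hβ with h0 | h0
        · exact h0.symm
        · exfalso
          have h1 : β * (c + ε) ≤ β * f q := mul_le_mul_of_nonneg_left hfq h0.le
          have h2 : 0 < β * ε := mul_pos h0 hε
          rw [hvc, hfx] at hfx2
          have key : β * f q = β * c := by linear_combination -hfx2 - c * hαβ
          nlinarith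
      have hα1 : α = 1 := by linarith
      rw [← hcomb, hβ0, hα1]; simp
  refine ⟨subset_convexHull ℝ s hv, ?_⟩
  intro x₁ h₁ x₂ h₂ hseg
  obtain ⟨α, β, hα, hβ, hαβ, hcomb⟩ := hseg
  have hfv : α * f x₁ + β * f x₂ = c := by
    rw [← hvc, ← hcomb]; simp [hf]; ring
  have l1 := hlb x₁ h₁
  have l2 := hlb x₂ h₂
  have e1 : f x₁ = c := by
    refine le_antisymm ?_ l1
    have h2 : β * c ≤ β * f x₂ := mul_le_mul_of_nonneg_left l2 hβ.le
    have hc : α * c + β * c = c := by linear_combination c * hαβ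
    have h3 : α * f x₁ ≤ α * c := by linarith
    exact le_of_mul_le_mul_left h3 hα
  have e2 : f x₂ = c := by
    refine le_antisymm ?_ l2
    have h2 : α * c ≤ α * f x₁ := mul_le_mul_of_nonneg_left l1 hα.le
    have hc : α * c + β * c = c := by linear_combination c * hαβ
    have h3 : β * f x₂ ≤ β * c := by linarith
    exact le_of_mul_le_mul_left h3 hβ
  exact hrig x₁ h₁ e1

open Finset

lemma card_sq {n : ℕ} (σ : Equiv.Perm (Fin n)) :
    (Finset.univ.filter fun i => σ (σ i) = i ∧ σ i ≠ i).card = 2 * numTwoCycles σ := by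
  classical
  set P := Finset.univ.filter (fun x : Fin n × Fin n => x.1 < x.2 ∧ σ x.1 = x.2 ∧ σ x.2 = x.1)
    with hP
  have hM : (Finset.univ.filter fun i => σ (σ i) = i ∧ σ i ≠ i)
      = P.image Prod.fst ∪ P.image Prod.snd := by
    ext i
    simp only [Finset.mem_filter, Finset.mem_univ, true_and, Finset.mem_union,
      Finset.mem_image, hP]
    constructor
    · rintro ⟨h2, h1⟩
      rcases lt_or_gt_of_ne h1 with hlt | hgt
      · exact Or.inr ⟨(σ i, i), by
          simp only [Finset.mem_filter, Finset.mem_univ, true_and]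
          exact ⟨hlt, h2, trivial⟩, rfl⟩
      · exact Or.inl ⟨(i, σ i), by
          simp only [Finset.mem_filter, Finset.mem_univ, true_and]
          exact ⟨hgt, h2⟩, rfl⟩
    · rintro (⟨⟨x₁, x₂⟩, hx, rfl⟩ | ⟨⟨x₁, x₂⟩, hx, rfl⟩) <;>
        simp only [Finset.mem_filter, Finset.mem_univ, true_and] at hx <;>
        obtain ⟨hlt, e1, e2⟩ := hx
      · exact ⟨by rw [e1, e2], by rw [e1]; exact (ne_of_gt hlt)⟩
      · exact ⟨by rw [e2, e1], by rw [e2]; exact (ne_of_lt hlt)⟩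
  have hdis : Disjoint (P.image Prod.fst) (P.image Prod.snd) := by
    rw [Finset.disjoint_left]
    rintro i hi₁ hi₂
    simp only [Finset.mem_image, hP, Finset.mem_filter, Finset.mem_univ, true_and] at hi₁ hi₂
    obtain ⟨p, hp, rfl⟩ := hi₁
    obtain ⟨q, hq, hq2⟩ := hi₂
    have h1 : p.1 < σ p.1 := by rw [hp.2.1]; exact hp.1
    have h2 : σ p.1 < p.1 := by
      rw [← hq2, hq.2.2]
      rw [hq2]
      exact lt_of_lt_of_le hq.1 (by rw [hq2])
    exact absurd (h1.trans h2) (lt_irrefl _)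
  have i1 : Set.InjOn Prod.fst (P : Set (Fin n × Fin n)) := by
    rintro p hp q hq h
    simp only [hP, Finset.coe_filter, Set.mem_setOf_eq] at hp hq
    exact Prod.ext h (by rw [← hp.2.2.1, ← hq.2.2.1, h])
  have i2 : Set.InjOn Prod.snd (P : Set (Fin n × Fin n)) := by
    rintro p hp q hq h
    simp only [hP, Finset.coe_filter, Set.mem_setOf_eq] at hp hq
    exact Prod.ext (by rw [← hp.2.2.2, ← hq.2.2.2, h]) h
  rw [hM, Finset.card_union_of_disjoint hdis, Finset.card_image_of_injOn i1,
    Finset.card_image_of_injOn i2, numTwoCycles, two_mul]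

lemma nonfixed_card {n : ℕ} (σ : Equiv.Perm (Fin n)) :
    numFixedPoints σ + (Finset.univ.filter fun i => σ i ≠ i).card = n := by
  classical
  rw [numFixedPoints, Finset.card_filter_add_card_filter_not, Finset.card_univ,
    Fintype.card_fin]

lemma sigma_apply_nonfixed {n : ℕ} (σ : Equiv.Perm (Fin n)) {i : Fin n} (h : σ i ≠ i) :
    σ (σ i) ≠ σ i := fun hc => h (σ.injective hc)

lemma two_t_le {n : ℕ} (σ : Equiv.Perm (Fin n)) :
    2 * numTwoCycles σ + numFixedPoints σ ≤ n := by
  classical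
  have hsub : (Finset.univ.filter fun i => σ (σ i) = i ∧ σ i ≠ i)
      ⊆ (Finset.univ.filter fun i => σ i ≠ i) := by
    intro i hi
    simp only [Finset.mem_filter] at hi ⊢
    exact ⟨hi.1, hi.2.2⟩
  have := Finset.card_le_card hsub
  rw [card_sq] at this
  have h2 := nonfixed_card σ
  omega
lemma fixed_le {n : ℕ} (σ : Equiv.Perm (Fin n)) (h : σ ≠ 1) :
    numFixedPoints σ + 2 ≤ n := by
  classical
  obtain ⟨i, hi⟩ : ∃ i, σ i ≠ i := by
    by_contra hc
    push_neg at hc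
    exact h (Equiv.ext fun i => hc i)
  have hsub : ({i, σ i} : Finset (Fin n)) ⊆ (Finset.univ.filter fun j => σ j ≠ j) := by
    intro j hj
    simp only [Finset.mem_insert, Finset.mem_singleton] at hj
    simp only [Finset.mem_filter, Finset.mem_univ, true_and]
    rcases hj with rfl | rfl
    · exact hi
    · exact sigma_apply_nonfixed σ hi
  have h2 : ({i, σ i} : Finset (Fin n)).card = 2 := Finset.card_pair (Ne.symm hi)
  have := Finset.card_le_card hsub
  rw [h2] at this
  have := nonfixed_card σ
  omega

lemma eq_case {n : ℕ} (σ : Equiv.Perm (Fin n)) (h : σ ≠ 1)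
    (hp : numFixedPoints σ = n - 2) : numTwoCycles σ = 1 := by
  classical
  have hle := fixed_le σ h
  have hcard := nonfixed_card σ
  have h2 : (Finset.univ.filter fun i => σ i ≠ i).card = 2 := by omega
  have hMeq : (Finset.univ.filter fun i => σ (σ i) = i ∧ σ i ≠ i)
      = (Finset.univ.filter fun i => σ i ≠ i) := by
    apply Finset.Subset.antisymm
    · intro i hi
      simp only [Finset.mem_filter] at hi ⊢
      exact ⟨hi.1, hi.2.2⟩
    · intro i hi
      simp only [Finset.mem_filter, Finset.mem_univ, true_and] at hi ⊢
      refine ⟨?_, hi⟩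
      obtain ⟨x, y, hxy, hset⟩ := Finset.card_eq_two.mp h2
      have hmem : ∀ j : Fin n, σ j ≠ j → j = x ∨ j = y := by
        intro j hj
        have : j ∈ (Finset.univ.filter fun i => σ i ≠ i) := by
          simp [hj]
        rw [hset] at this
        simpa using this
      have hi2 := sigma_apply_nonfixed σ hi
      have hi3 := sigma_apply_nonfixed σ hi2
      -- i, σ i, σ (σ i) all in the 2-element set {x,y}; σ i ≠ i and σ (σ i) ≠ σ i
      have hia := hmem i hi
      have hb := hmem _ hi2
      have hc := hmem _ hi3
      clear hi3 hmem hset h2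
      rcases hb with e1 | e1 <;> rcases hia with e | e <;> rcases hc with e2 | e2 <;>
        simp_all <;>
        first
          | exact hxy ((σ.injective (by rw [e1, e2])).symm)
          | exact hxy (σ.injective (by rw [e1, e2]))
  have := card_sq σ
  rw [hMeq, h2] at this
  omega


lemma fix_zero_of {n : ℕ} (σ : Equiv.Perm (Fin n)) (h : ∀ i, σ i ≠ i) :
    numFixedPoints σ = 0 := by
  rw [numFixedPoints, Finset.card_eq_zero, Finset.filter_eq_empty_iff]
  exact fun i _ => h i

lemma two_zero_of {n : ℕ} (σ : Equiv.Perm (Fin n))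
    (h : ∀ i, σ (σ i) ≠ i ∨ σ i = i) : numTwoCycles σ = 0 := by
  rw [numTwoCycles, Finset.card_eq_zero, Finset.filter_eq_empty_iff]
  rintro ⟨x₁, x₂⟩ _ ⟨hlt, e1, e2⟩
  rcases h x₁ with h' | h'
  · exact h' (by rw [e1, e2])
  · exact absurd (h' ▸ e1 : x₁ = x₂) (ne_of_lt hlt)

lemma numFixedPoints_compl {n : ℕ} (σ : Equiv.Perm (Fin n)) (s : Finset (Fin n))
    (h : ∀ i, σ i = i ↔ i ∉ s) : numFixedPoints σ = n - s.card := by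
  have : (Finset.univ.filter fun i : Fin n => σ i = i) = Finset.univ \ s := by
    ext i
    simp [h i]
  rw [numFixedPoints, this, Finset.card_sdiff_of_subset (Finset.subset_univ s), Finset.card_univ,
    Fintype.card_fin]

section witnesses
variable {n : ℕ}

-- the n-cycle
lemma shift_props (hn : 4 ≤ n) : ∃ σ : Equiv.Perm (Fin n), σ ≠ 1 ∧
    numFixedPoints σ = 0 ∧ numTwoCycles σ = 0 := by
  haveI : NeZero n := ⟨by omega⟩
  have hone : ((1 : Fin n) : ℕ) = 1 := by
    rw [Fin.val_one']
    exact Nat.mod_eq_of_lt (by omega)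
  have key : ∀ j : Fin n, ((j + 1 : Fin n) : ℕ) = (j : ℕ) + 1 ∨
      (((j + 1 : Fin n) : ℕ) = 0 ∧ (j : ℕ) + 1 = n) := by
    intro j
    rw [Fin.val_add, hone]
    rcases lt_or_eq_of_le (Nat.succ_le_of_lt j.isLt) with h | h
    · exact Or.inl (Nat.mod_eq_of_lt h)
    · right
      have h' : (j : ℕ) + 1 = n := h
      exact ⟨by rw [h', Nat.mod_self], h'⟩
  have hfix : ∀ i : Fin n, (Equiv.addRight (1 : Fin n)) i ≠ i := by
    intro i hc
    have := congrArg Fin.val hc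
    simp only [Equiv.coe_addRight] at this
    rcases key i with h | ⟨h, h'⟩ <;> omega
  refine ⟨Equiv.addRight (1 : Fin n), ?_, fix_zero_of _ hfix, ?_⟩
  · intro hc
    exact hfix (⟨0, by omega⟩ : Fin n) (by rw [hc]; rfl)
  · apply two_zero_of
    intro i
    left
    intro hc
    have := congrArg Fin.val hc
    simp only [Equiv.coe_addRight] at this
    have hi := i.isLt
    rcases key i with h | ⟨h, h'⟩ <;> rcases key (i + 1) with h2 | ⟨h2, h2'⟩ <;> omega

-- the transposition
lemma swap_props (hn : 4 ≤ n) : ∃ σ : Equiv.Perm (Fin n), σ ≠ 1 ∧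
    numFixedPoints σ = n - 2 ∧ numTwoCycles σ = 1 := by
  set a : Fin n := ⟨0, by omega⟩ with ha
  set b : Fin n := ⟨1, by omega⟩ with hb
  have hab : a ≠ b := by simp [ha, hb, Fin.ext_iff]
  refine ⟨Equiv.swap a b, ?_, ?_, ?_⟩
  · intro hc
    have : Equiv.swap a b a = a := by rw [hc]; rfl
    rw [Equiv.swap_apply_left] at this
    exact hab this.symm
  · apply numFixedPoints_compl _ ({a, b} : Finset (Fin n))
    intro i
    constructor
    · intro hfix hmem
      simp only [Finset.mem_insert, Finset.mem_singleton] at hmem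
      rcases hmem with rfl | rfl
      · rw [Equiv.swap_apply_left] at hfix; exact hab hfix.symm
      · rw [Equiv.swap_apply_right] at hfix; exact hab hfix
    · intro hmem
      simp only [Finset.mem_insert, Finset.mem_singleton, not_or] at hmem
      exact Equiv.swap_apply_of_ne_of_ne hmem.1 hmem.2
  · rw [numTwoCycles]
    have : (Finset.univ.filter (fun x : Fin n × Fin n =>
        x.1 < x.2 ∧ Equiv.swap a b x.1 = x.2 ∧ Equiv.swap a b x.2 = x.1))
        = {(a, b)} := by
      ext p
      simp only [Finset.mem_filter, Finset.mem_univ, true_and, Finset.mem_singleton]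
      constructor
      · rintro ⟨hlt, e1, e2⟩
        have hne1 : p.1 = a ∨ p.1 = b := by
          by_contra hc
          push_neg at hc
          rw [Equiv.swap_apply_of_ne_of_ne hc.1 hc.2] at e1
          exact (ne_of_lt hlt) e1
        have hne2 : p.2 = a ∨ p.2 = b := by
          by_contra hc
          push_neg at hc
          rw [Equiv.swap_apply_of_ne_of_ne hc.1 hc.2] at e2
          exact (ne_of_gt hlt) e2
        have hba : ¬ (b < a) := by simp [ha, hb, Fin.lt_def]
        rcases hne1 with h1 | h1 <;> rcases hne2 with h2 | h2
        · rw [h1, h2] at hlt; exact absurd hlt (lt_irrefl a)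
        · exact Prod.ext h1 h2
        · rw [h1, h2] at hlt; exact absurd hlt hba
        · rw [h1, h2] at hlt; exact absurd hlt (lt_irrefl b)
      · rintro rfl
        refine ⟨?_, Equiv.swap_apply_left a b, Equiv.swap_apply_right a b⟩
        simp [ha, hb, Fin.lt_def]
    rw [this, Finset.card_singleton]

-- the 3-cycle
lemma three_props (hn : 4 ≤ n) : ∃ σ : Equiv.Perm (Fin n), σ ≠ 1 ∧
    numFixedPoints σ = n - 3 ∧ numTwoCycles σ = 0 := by
  set a : Fin n := ⟨0, by omega⟩ with ha
  set b : Fin n := ⟨1, by omega⟩ with hb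
  set c : Fin n := ⟨2, by omega⟩ with hc
  have hab : a ≠ b := by simp [ha, hb, Fin.ext_iff]
  have hac : a ≠ c := by simp [ha, hc, Fin.ext_iff]
  have hbc : b ≠ c := by simp [hb, hc, Fin.ext_iff]
  set σ : Equiv.Perm (Fin n) := Equiv.swap a b * Equiv.swap a c with hσ
  have hsa : σ a = c := by
    rw [hσ, Equiv.Perm.mul_apply, Equiv.swap_apply_left,
      Equiv.swap_apply_of_ne_of_ne hac.symm hbc.symm]
  have hsb : σ b = a := by
    rw [hσ, Equiv.Perm.mul_apply, Equiv.swap_apply_of_ne_of_ne hab.symm hbc,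
      Equiv.swap_apply_right]
  have hsc : σ c = b := by
    rw [hσ, Equiv.Perm.mul_apply, Equiv.swap_apply_right, Equiv.swap_apply_left]
  have hother : ∀ i, i ≠ a → i ≠ b → i ≠ c → σ i = i := by
    intro i h1 h2 h3
    rw [hσ, Equiv.Perm.mul_apply, Equiv.swap_apply_of_ne_of_ne h1 h3,
      Equiv.swap_apply_of_ne_of_ne h1 h2]
  refine ⟨σ, ?_, ?_, ?_⟩
  · intro hone
    have : σ a = a := by rw [hone]; rfl
    rw [hsa] at this
    exact hac this.symm
  · apply numFixedPoints_compl _ ({a, b, c} : Finset (Fin n))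
    intro i
    constructor
    · intro hfix hmem
      simp only [Finset.mem_insert, Finset.mem_singleton] at hmem
      rcases hmem with rfl | rfl | rfl
      · rw [hsa] at hfix; exact hac hfix.symm
      · rw [hsb] at hfix; exact hab hfix
      · rw [hsc] at hfix; exact hbc hfix
    · intro hmem
      simp only [Finset.mem_insert, Finset.mem_singleton, not_or] at hmem
      exact hother i hmem.1 hmem.2.1 hmem.2.2
  · apply two_zero_of
    intro i
    by_cases h1 : i = a
    · left; subst h1; rw [hsa, hsc]; exact fun h => hab (h ▸ rfl)
    by_cases h2 : i = b
    · left; subst h2; rw [hsb, hsa]; exact fun h => hbc (h ▸ rfl)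
    by_cases h3 : i = c
    · left; subst h3; rw [hsc, hsb]; exact fun h => hac (h ▸ rfl)
    · right; exact hother i h1 h2 h3

-- the fixed-point-free involution
lemma rev_props (hn : 4 ≤ n) (hne : Even n) : ∃ σ : Equiv.Perm (Fin n), σ ≠ 1 ∧
    numFixedPoints σ = 0 ∧ numTwoCycles σ = n / 2 := by
  obtain ⟨m, hm⟩ := hne
  refine ⟨Fin.revPerm, ?_, ?_, ?_⟩
  · intro hc
    have h0 : Fin.revPerm (⟨0, by omega⟩ : Fin n) = ⟨0, by omega⟩ := by rw [hc]; rfl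
    have := congrArg Fin.val h0
    rw [Fin.revPerm_apply, Fin.val_rev] at this
    simp at this
    omega
  · apply fix_zero_of
    intro i hc
    have := congrArg Fin.val hc
    rw [Fin.revPerm_apply, Fin.val_rev] at this
    have hi := i.isLt
    omega
  · rw [numTwoCycles]
    have himg : (Finset.univ.filter (fun x : Fin n × Fin n =>
        x.1 < x.2 ∧ Fin.revPerm x.1 = x.2 ∧ Fin.revPerm x.2 = x.1))
        = (Finset.univ.filter (fun i : Fin n => (i : ℕ) < n / 2)).image
            (fun i => (i, Fin.rev i)) := by
      ext p
      simp only [Finset.mem_filter, Finset.mem_univ, true_and, Finset.mem_image,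
        Fin.revPerm_apply]
      constructor
      · rintro ⟨hlt, e1, _⟩
        refine ⟨p.1, ?_, by rw [e1]⟩
        have hv := Fin.val_rev p.1
        rw [e1] at hv
        have := (Fin.lt_def.mp hlt)
        have h1 := p.1.isLt
        omega
      · rintro ⟨i, hi, rfl⟩
        have h1 := i.isLt
        have hlt : i < Fin.rev i := by
          rw [Fin.lt_def, Fin.val_rev]
          omega
        exact ⟨hlt, rfl, Fin.rev_rev i⟩
    rw [himg, Finset.card_image_of_injective _ (fun i j h => congrArg Prod.fst h)]
    apply Finset.card_eq_of_bijective (fun i h => (⟨i, by omega⟩ : Fin n))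
    · intro a ha
      simp only [Finset.mem_filter, Finset.mem_univ, true_and] at ha
      exact ⟨a.val, ha, rfl⟩
    · intro i h
      simp only [Finset.mem_filter, Finset.mem_univ, true_and]
      exact h
    · intro i j hi hj h
      exact congrArg Fin.val h

end witnesses


lemma mem_conv_quad (q y N : ℝ) (hN : 4 ≤ N) (hq0 : 0 ≤ q) (hq : q ≤ N - 3)
    (hy0 : 0 ≤ y) (hy1 : y ≤ 1) :
    (q, y) ∈ convexHull ℝ ({((0:ℝ),(0:ℝ)), (N-3, 0), (N-2, 1), ((0:ℝ),(1:ℝ))} : Set (ℝ×ℝ)) := by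
  set V : Set (ℝ×ℝ) := {((0:ℝ),(0:ℝ)), (N-3, 0), (N-2, 1), ((0:ℝ),(1:ℝ))} with hV
  have hconv : Convex ℝ (convexHull ℝ V) := convex_convexHull ℝ V
  have memA : ((0:ℝ),(0:ℝ)) ∈ convexHull ℝ V := subset_convexHull ℝ V (by simp [hV])
  have memB : ((N-3:ℝ),(0:ℝ)) ∈ convexHull ℝ V := subset_convexHull ℝ V (by simp [hV])
  have memC : ((N-2:ℝ),(1:ℝ)) ∈ convexHull ℝ V := subset_convexHull ℝ V (by simp [hV])
  have memD : ((0:ℝ),(1:ℝ)) ∈ convexHull ℝ V := subset_convexHull ℝ V (by simp [hV])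
  have h3 : (0:ℝ) < N - 3 := by linarith
  have h2 : (0:ℝ) < N - 2 := by linarith
  have hbot : ((q:ℝ), (0:ℝ)) ∈ convexHull ℝ V := by
    apply hconv.segment_subset memA memB
    refine ⟨1 - q/(N-3), q/(N-3), by rw [sub_nonneg, div_le_one h3]; linarith, by positivity, by ring, ?_⟩
    rw [Prod.ext_iff]
    constructor
    · simp only [Prod.smul_mk, smul_eq_mul, Prod.fst_add]
      field_simp
      ring
    · simp only [Prod.smul_mk, smul_eq_mul, Prod.snd_add]
      ring
  have htop : ((q:ℝ), (1:ℝ)) ∈ convexHull ℝ V := by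
    apply hconv.segment_subset memD memC
    have hq2 : q ≤ N - 2 := by linarith
    refine ⟨1 - q/(N-2), q/(N-2), by rw [sub_nonneg, div_le_one h2]; linarith, by positivity, by ring, ?_⟩
    rw [Prod.ext_iff]
    constructor
    · simp only [Prod.smul_mk, smul_eq_mul, Prod.fst_add]
      field_simp
      ring
    · simp only [Prod.smul_mk, smul_eq_mul, Prod.snd_add]
      field_simp
      ring
  apply hconv.segment_subset hbot htop
  refine ⟨1 - y, y, by linarith, hy0, by ring, ?_⟩
  rw [Prod.ext_iff]
  constructor
  · simp only [Prod.smul_mk, smul_eq_mul, Prod.fst_add]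
    ring
  · simp only [Prod.smul_mk, smul_eq_mul, Prod.snd_add]
    ring

theorem stmt_14 (n : ℕ) (hn : 4 ≤ n) (hne : Even n)
    (S : Set (ℝ × ℝ))
    (hS : S = {x : ℝ × ℝ | ∃ σ : Equiv.Perm (Fin n), σ ≠ 1 ∧
      x = ((numFixedPoints σ : ℝ),
            2 * (numTwoCycles σ : ℝ) / ((n : ℝ) - (numFixedPoints σ : ℝ)))}) :
    Set.extremePoints ℝ (convexHull ℝ S) =
      {((0 : ℝ), (0 : ℝ)), ((n : ℝ) - 3, (0 : ℝ)), ((n : ℝ) - 2, (1 : ℝ)),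
        ((0 : ℝ), (1 : ℝ))} := by
  have h4 : (4:ℝ) ≤ (n:ℝ) := by exact_mod_cast hn
  set V : Set (ℝ×ℝ) := {((0:ℝ),(0:ℝ)), ((n:ℝ)-3, 0), ((n:ℝ)-2, 1), ((0:ℝ),(1:ℝ))} with hV
  -- V ⊆ S
  have hVS : V ⊆ S := by
    rw [hS]
    intro v hv
    rcases hv with rfl | rfl | rfl | rfl
    · obtain ⟨σ, h1, h2, h3⟩ := shift_props hn
      exact ⟨σ, h1, by rw [h2, h3]; norm_num⟩
    · obtain ⟨σ, h1, h2, h3⟩ := three_props hn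
      refine ⟨σ, h1, ?_⟩
      rw [h2, h3]
      have : ((n - 3 : ℕ) : ℝ) = (n:ℝ) - 3 := by
        have : (3:ℕ) ≤ n := by omega
        push_cast [this]
        ring
      rw [this]
      norm_num
    · obtain ⟨σ, h1, h2, h3⟩ := swap_props hn
      refine ⟨σ, h1, ?_⟩
      rw [h2, h3]
      have hc : ((n - 2 : ℕ) : ℝ) = (n:ℝ) - 2 := by
        have : (2:ℕ) ≤ n := by omega
        push_cast [this]
        ring
      rw [hc]
      have hd : (n:ℝ) - ((n:ℝ) - 2) = 2 := by ring
      rw [hd]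
      norm_num
    · obtain ⟨σ, h1, h2, h3⟩ := rev_props hn hne
      refine ⟨σ, h1, ?_⟩
      rw [h2, h3]
      have hdvd : n / 2 * 2 = n := Nat.div_mul_cancel hne.two_dvd
      have hc : ((n / 2 : ℕ) : ℝ) * 2 = (n:ℝ) := by exact_mod_cast congrArg (Nat.cast : ℕ → ℝ) hdvd
      have hn0 : (n:ℝ) ≠ 0 := by linarith
      rw [Prod.ext_iff]
      constructor
      · norm_num
      · show (1:ℝ) = 2 * ((n / 2 : ℕ) : ℝ) / ((n:ℝ) - ((0:ℕ):ℝ))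
        rw [Nat.cast_zero, sub_zero]
        field_simp
        linarith
  -- S ⊆ convexHull V
  have hSco : S ⊆ convexHull ℝ V := by
    rw [hS]
    rintro x ⟨σ, hσ, rfl⟩
    have hf2 := fixed_le σ hσ
    have ht := two_t_le σ
    set p := numFixedPoints σ with hp
    set t := numTwoCycles σ with htt
    by_cases hpc : p = n - 2
    · have ht1 : t = 1 := eq_case σ hσ hpc
      have hc : ((p : ℕ) : ℝ) = (n:ℝ) - 2 := by
        rw [hpc]
        have : (2:ℕ) ≤ n := by omega
        push_cast [this]
        ring
      have : (((p:ℕ):ℝ), 2 * ((t:ℕ):ℝ) / ((n : ℝ) - ((p:ℕ):ℝ))) = (((n:ℝ)-2), (1:ℝ)) := by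
        rw [Prod.ext_iff]
        refine ⟨hc, ?_⟩
        rw [ht1, hc]
        norm_num
      rw [this]
      exact subset_convexHull ℝ V (by simp [hV])
    · have hp3 : p ≤ n - 3 := by omega
      have hq : ((p:ℕ):ℝ) ≤ (n:ℝ) - 3 := by
        have h1 : ((p:ℕ):ℝ) ≤ ((n - 3 : ℕ):ℝ) := by exact_mod_cast hp3
        have h2 : ((n - 3 : ℕ) : ℝ) = (n:ℝ) - 3 := by
          have : (3:ℕ) ≤ n := by omega
          push_cast [this]; ring
        linarith [h2 ▸ h1]
      have hdpos : (0:ℝ) < (n:ℝ) - ((p:ℕ):ℝ) := by linarith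
      have hy0 : (0:ℝ) ≤ 2 * ((t:ℕ):ℝ) / ((n : ℝ) - ((p:ℕ):ℝ)) := by positivity
      have hy1 : 2 * ((t:ℕ):ℝ) / ((n : ℝ) - ((p:ℕ):ℝ)) ≤ 1 := by
        rw [div_le_one hdpos]
        have : (2 * t + p : ℕ) ≤ n := ht
        have hcast : ((2 * t + p : ℕ) : ℝ) ≤ ((n:ℕ):ℝ) := by exact_mod_cast this
        push_cast at hcast
        linarith
      exact mem_conv_quad _ _ _ h4 (by positivity) hq hy0 hy1
  have hull_eq : convexHull ℝ S = convexHull ℝ V :=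
    le_antisymm (convexHull_min hSco (convex_convexHull ℝ V)) (convexHull_mono hVS)
  rw [hull_eq]
  apply Set.Subset.antisymm
  · exact extremePoints_convexHull_subset
  · intro v hv
    have key : ∀ w ∈ V, w = ((0:ℝ),(0:ℝ)) ∨ w = ((n:ℝ)-3, 0) ∨ w = ((n:ℝ)-2, 1) ∨
        w = ((0:ℝ),(1:ℝ)) := by
      intro w hw
      simpa [hV] using hw
    rcases hv with rfl | rfl | rfl | rfl
    · apply extreme_aux V _ (by simp [hV]) 1 1 0 1 one_pos (by norm_num)
      intro w hw
      rcases key w hw with rfl | rfl | rfl | rfl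
      · left; rfl
      · right; simp; try linarith
      · right; simp; try linarith
      · right; simp
    · apply extreme_aux V _ (by simp [hV]) (-1) 2 (3 - (n:ℝ)) 1 one_pos (by simp; try ring)
      intro w hw
      rcases key w hw with rfl | rfl | rfl | rfl
      · right; simp; try linarith
      · left; rfl
      · right; simp; try linarith
      · right; simp; try linarith
    · apply extreme_aux V _ (by simp [hV]) (-1) (-1) (1 - (n:ℝ)) 1 one_pos (by simp; try ring)
      intro w hw
      rcases key w hw with rfl | rfl | rfl | rfl
      · right; simp; try linarith
      · right; simp; try linarith
      · left; rfl
      · right; simp; try linarith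
    · apply extreme_aux V _ (by simp [hV]) 1 (-1) (-1) 1 one_pos (by norm_num)
      intro w hw
      rcases key w hw with rfl | rfl | rfl | rfl
      · right; simp; try linarith
      · right; simp; try linarith
      · right; simp; try linarith
      · left; rfl
end

section
/- Fix $n\ge 5$ and $2\le k\le n-2$. Let $g:S_n\to\mathbb{R}$ be of the form $g=\alpha_1\frac{p-1}{n-1}+\alpha_2\frac{p^2-2}{n^2-2}+\alpha_3(1-2t)$ with $\alpha_1+\alpha_2+\alpha_3=1$ (so $g(e)=1$). Let $\sigma_k$ have $p(\sigma_k)=k$, $t(\sigma_k)=0$; let $\eta$ have $p(\eta)=0$, $t(\eta)=1$; let $\theta$ have $p(\theta)=t(\theta)=0$. Then $\max\{g(\sigma_k),g(\eta),g(\theta)\}\ge\frac{k-2}{n^2-kn+k-2}$. -/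
theorem div_le_max_of_weighted_sum_eq {w₁ w₂ w₃ x y z s W : ℝ}
    (h₁ : 0 ≤ w₁) (h₂ : 0 ≤ w₂) (h₃ : 0 ≤ w₃) (hs : w₁ * x + w₂ * y + w₃ * z = s)
    (hW : w₁ + w₂ + w₃ = W) (hW_pos : 0 < W) :
    s / W ≤ max x (max y z) := by
  set M := max x (max y z)
  have hx : w₁ * x ≤ w₁ * M := mul_le_mul_of_nonneg_left (le_max_left _ _) h₁
  have hy : w₂ * y ≤ w₂ * M :=
    mul_le_mul_of_nonneg_left ((le_max_left _ _).trans (le_max_right _ _)) h₂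
  have hz : w₃ * z ≤ w₃ * M :=
    mul_le_mul_of_nonneg_left ((le_max_right _ _).trans (le_max_right _ _)) h₃
  rw [div_le_iff₀ hW_pos, ← hs, ← hW]
  linarith

noncomputable def fixedPointTwoCycleForm (n α₁ α₂ α₃ p t : ℝ) : ℝ :=
  α₁ * (p - 1) / (n - 1) + α₂ * (p ^ 2 - 2) / (n ^ 2 - 2) + α₃ * (1 - 2 * t)

theorem fixedPointTwoCycleForm_weighted_sum {n k α₁ α₂ α₃ : ℝ} (hα : α₁ + α₂ + α₃ = 1)
    (hn₁ : n - 1 ≠ 0) (hn₂ : n ^ 2 - 2 ≠ 0) :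
    2 * n * (n - 2) * fixedPointTwoCycleForm n α₁ α₂ α₃ k 0
      + k * n * (n - k) * fixedPointTwoCycleForm n α₁ α₂ α₃ 0 1
      + (n - 2) * (n - k) * (k - 2) * fixedPointTwoCycleForm n α₁ α₂ α₃ 0 0
      = 2 * k * (k - 2) := by
  obtain rfl : α₃ = 1 - α₁ - α₂ := by linarith
  unfold fixedPointTwoCycleForm
  field_simp
  ring

theorem stmt_18_general (n k : ℕ) (hk2 : 2 ≤ k) (hkn : k ≤ n - 2)
    (α₁ α₂ α₃ : ℝ) (hα : α₁ + α₂ + α₃ = 1)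
    (g : Equiv.Perm (Fin n) → ℝ)
    (hg : ∀ σ, g σ = α₁ * ((numFixedPoints σ : ℝ) - 1) / ((n : ℝ) - 1)
        + α₂ * ((numFixedPoints σ : ℝ) ^ 2 - 2) / ((n : ℝ) ^ 2 - 2)
        + α₃ * (1 - 2 * (numTwoCycles σ : ℝ)))
    (σk η θ : Equiv.Perm (Fin n))
    (hσk : numFixedPoints σk = k ∧ numTwoCycles σk = 0)
    (hη : numFixedPoints η = 0 ∧ numTwoCycles η = 1)
    (hθ : numFixedPoints θ = 0 ∧ numTwoCycles θ = 0) :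
    ((k : ℝ) - 2) / ((n : ℝ) ^ 2 - (k : ℝ) * (n : ℝ) + (k : ℝ) - 2)
      ≤ max (g σk) (max (g η) (g θ)) := by
  have hk : (2 : ℝ) ≤ k := by exact_mod_cast hk2
  have hkn' : (k : ℝ) + 2 ≤ n := by exact_mod_cast (by omega : k + 2 ≤ n)
  have hg_eq : ∀ σ (p t : ℝ), (numFixedPoints σ : ℝ) = p → (numTwoCycles σ : ℝ) = t →
      g σ = fixedPointTwoCycleForm n α₁ α₂ α₃ p t := by
    rintro σ p t rfl rfl
    exact hg σ
  have key := fixedPointTwoCycleForm_weighted_sum (n := (n : ℝ)) (k := (k : ℝ)) hα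
    (by nlinarith) (by nlinarith)
  rw [← hg_eq σk k 0 (by simp [hσk]) (by simp [hσk]),
    ← hg_eq η 0 1 (by simp [hη]) (by simp [hη]), ← hg_eq θ 0 0 (by simp [hθ]) (by simp [hθ])] at key
  have hn2 : (0 : ℝ) ≤ n - 2 := by linarith
  have hnk : (0 : ℝ) ≤ n - k := by linarith
  have hk2' : (0 : ℝ) ≤ k - 2 := by linarith
  have hD : 0 < (n : ℝ) ^ 2 - k * n + k - 2 := by nlinarith
  have hbound := div_le_max_of_weighted_sum_eq (by positivity) (by positivity) (by positivity) key
    (by ring) (by positivity : 0 < 2 * (k : ℝ) * ((n : ℝ) ^ 2 - k * n + k - 2))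
  rwa [mul_div_mul_left _ _ (by positivity)] at hbound

theorem stmt_18 (n k : ℕ) (hn : 5 ≤ n) (hk2 : 2 ≤ k) (hkn : k ≤ n - 2)
    (α₁ α₂ α₃ : ℝ) (hα : α₁ + α₂ + α₃ = 1)
    (g : Equiv.Perm (Fin n) → ℝ)
    (hg : ∀ σ, g σ = α₁ * ((numFixedPoints σ : ℝ) - 1) / ((n : ℝ) - 1)
        + α₂ * ((numFixedPoints σ : ℝ) ^ 2 - 2) / ((n : ℝ) ^ 2 - 2)
        + α₃ * (1 - 2 * (numTwoCycles σ : ℝ)))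
    (σk η θ : Equiv.Perm (Fin n))
    (hσk : numFixedPoints σk = k ∧ numTwoCycles σk = 0)
    (hη : numFixedPoints η = 0 ∧ numTwoCycles η = 1)
    (hθ : numFixedPoints θ = 0 ∧ numTwoCycles θ = 0) :
    ((k : ℝ) - 2) / ((n : ℝ) ^ 2 - (k : ℝ) * (n : ℝ) + (k : ℝ) - 2)
      ≤ max (g σk) (max (g η) (g θ)) :=
  stmt_18_general n k hk2 hkn α₁ α₂ α₃ hα g hg σk η θ hσk hη hθ
end
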